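/- Let A and B be abelian groups with A torsion-free, and let φ : A → B be a surjective group homomorphism. If the precomposition map from Hom(B, ℂ) to Hom(A, ℂ) sending g to g ∘ φ is surjective (i.e. every additive homomorphism A → ℂ factors through φ), then φ is injective. (This is the group-theoretic core of Lemma 2.10 of the paper: the surjectivity of the restriction map H¹(X̃_f, ℂ) → H¹(F, ℂ), provided by Blanchard's degeneration theorem, forces the map π₁(F) → π₁(X̃_f) of abelian groups to be injective.) -/

import Mathlib

/-!
A nonzero `a` in a torsion-free group spans a copy of `ℤ`, and since `ℂ` is divisible, hence an
injective `ℤ`-module, the homomorphism `n • a ↦ n` extends to some `f : A →+ ℂ` with `f a = 1`.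
If `f` factors through `φ`, then `φ a ≠ 0`.
-/

instance Complex.instModuleInjectiveInt : Module.Injective ℤ ℂ :=
  (Module.Baer.of_divisible ℂ).injective

theorem zsmul_left_injective_of_torsionFree {A : Type*} [AddCommGroup A]
    (hA : ∀ n : ℤ, n ≠ 0 → ∀ a : A, n • a = 0 → a = 0) {a : A} (ha : a ≠ 0) :
    Function.Injective fun n : ℤ => n • a := by
  intro m n hmn
  by_contra hne
  exact ha (hA (m - n) (sub_ne_zero.mpr hne) a (by rw [sub_smul, sub_eq_zero]; exact hmn))

theorem AddMonoidHom.exists_apply_eq_of_zsmul_left_injective {A M : Type*} [AddCommGroup A]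
    [AddCommGroup M] [Module.Injective ℤ M] {a : A} (ha : Function.Injective fun n : ℤ => n • a)
    (m : M) : ∃ f : A →+ M, f a = m := by
  obtain ⟨f, hf⟩ := Module.Injective.extension_property ℤ M ℤ A
    (LinearMap.toSpanSingleton ℤ A a) ha (LinearMap.toSpanSingleton ℤ M m)
  exact ⟨f.toAddMonoidHom, by simpa using LinearMap.congr_fun hf 1⟩

theorem injective_of_torsionFree_of_homs_factor_general
    {A B : Type*} [AddCommGroup A] [AddCommGroup B]
    (hA : ∀ n : ℤ, n ≠ 0 → ∀ a : A, n • a = 0 → a = 0)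
    (φ : A →+ B)
    (hfact : ∀ f : A →+ ℂ, ∃ g : B →+ ℂ, g.comp φ = f) :
    Function.Injective φ := by
  rw [injective_iff_map_eq_zero]
  intro a hφa
  by_contra ha
  obtain ⟨f, hfa⟩ := AddMonoidHom.exists_apply_eq_of_zsmul_left_injective
    (zsmul_left_injective_of_torsionFree hA ha) (1 : ℂ)
  obtain ⟨g, rfl⟩ := hfact f
  have hg : g (φ a) = 1 := hfa
  rw [hφa, map_zero] at hg
  exact zero_ne_one hg

/-- Let `A`, `B` be abelian groups with `A` torsion-free, and `φ : A → B` a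
surjective group homomorphism. If every additive homomorphism `A → ℂ`
factors through `φ` (i.e. the precomposition map `Hom(B, ℂ) → Hom(A, ℂ)` is
surjective), then `φ` is injective. -/
theorem injective_of_torsionFree_of_homs_factor
    {A B : Type*} [AddCommGroup A] [AddCommGroup B]
    (hA : ∀ n : ℤ, n ≠ 0 → ∀ a : A, n • a = 0 → a = 0)
    (φ : A →+ B) (hφ : Function.Surjective φ)
    (hfact : ∀ f : A →+ ℂ, ∃ g : B →+ ℂ, g.comp φ = f) :
    Function.Injective φ :=
  injective_of_torsionFree_of_homs_factor_general hA φ hfact
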